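/- Consider the index-reduced ODE system ẏ = f(y,z), ż = h(y,z) with true solution (y,z) and approximation (Y,Z), and let (ν^{(y)}, ν^{(z)}) solve the adjoint ODE -ν̇^{(y)} = f̄_yᵀ ν^{(y)} + h̄_yᵀ ν^{(z)} + ψ^y, -ν̇^{(z)} = f̄_zᵀ ν^{(y)} + h̄_zᵀ ν^{(z)} + ψ^z on [0,T) with terminal conditions ν^{(y)}(T) = ζ^y, ν^{(z)}(T) = ζ^z. Then ∫₀ᵀ (e^{(y)}, ψ^y) dt + ∫₀ᵀ (e^{(z)}, ψ^z) dt + (e^{(y)}(T), ζ^y) + (e^{(z)}(T), ζ^z) = (ν^{(y)}(0), e^{(y)}(0)) + (ν^{(z)}(0), e^{(z)}(0)) + ∫₀ᵀ (ν^{(y)}, f(Y,Z) - Ẏ) dt + ∫₀ᵀ (ν^{(z)}, h(Y,Z) - Ż) dt. -/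

import Mathlib

/-!
Stack the errors `(y - Y, z - Z)` and the adjoint states `(νy, νz)` into vectors `e`, `ν` indexed
by `Fin n ⊕ Fin m`, and the averaged Jacobians into the block matrix `J`. Then `e' = J e + r` with
the residual `r = (f(Y,Z) - Y', h(Y,Z) - Z')` and `-ν' = Jᵀ ν + ψ`, so in
`(ν ⬝ᵥ e)' = ν' ⬝ᵥ e + ν ⬝ᵥ e'` the `J`-terms cancel: `(ν ⬝ᵥ e)' = ν ⬝ᵥ r - e ⬝ᵥ ψ`.
Integrating over `[0, T]` gives the identity.
-/

open Matrix MeasureTheory Set intervalIntegral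

section Calculus

variable {𝕜 : Type*} [NontriviallyNormedField 𝕜] {ι κ : Type*} {t : 𝕜}

theorem HasDerivAt.dotProduct [Fintype ι] {u v : 𝕜 → ι → 𝕜} {u' v' : ι → 𝕜}
    (hu : HasDerivAt u u' t) (hv : HasDerivAt v v' t) :
    HasDerivAt (fun s => u s ⬝ᵥ v s) (u' ⬝ᵥ v t + u t ⬝ᵥ v') t := by
  have := HasDerivAt.fun_sum (u := Finset.univ) fun i _ =>
    (hasDerivAt_pi.mp hu i).mul (hasDerivAt_pi.mp hv i)
  rw [Finset.sum_add_distrib] at this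
  exact this

theorem HasDerivAt.sumElim {u : 𝕜 → ι → 𝕜} {v : 𝕜 → κ → 𝕜} {u' : ι → 𝕜} {v' : κ → 𝕜}
    (hu : HasDerivAt u u' t) (hv : HasDerivAt v v' t) :
    HasDerivAt (fun s => u s ⊕ᵥ v s) (u' ⊕ᵥ v') t :=
  hasDerivAt_pi.mpr fun
    | .inl i => hasDerivAt_pi.mp hu i
    | .inr j => hasDerivAt_pi.mp hv j

end Calculus

theorem ContinuousOn.dotProduct {α ι R : Type*} [TopologicalSpace α] [Fintype ι]
    [TopologicalSpace R] [Mul R] [AddCommMonoid R] [ContinuousAdd R] [ContinuousMul R]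
    {u v : α → ι → R} {s : Set α} (hu : ContinuousOn u s) (hv : ContinuousOn v s) :
    ContinuousOn (fun x => u x ⬝ᵥ v x) s :=
  (continuous_fst.dotProduct continuous_snd).comp_continuousOn (hu.prodMk hv)

theorem Matrix.fromBlocks_mulVec_sumElim {l m n o α : Type*} [Fintype l] [Fintype m]
    [NonUnitalNonAssocSemiring α] (A : Matrix n l α) (B : Matrix n m α) (C : Matrix o l α)
    (D : Matrix o m α) (x : l → α) (y : m → α) :
    fromBlocks A B C D *ᵥ (x ⊕ᵥ y) = (A *ᵥ x + B *ᵥ y) ⊕ᵥ (C *ᵥ x + D *ᵥ y) := by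
  rw [fromBlocks_mulVec, Sum.elim_comp_inl, Sum.elim_comp_inr]

theorem adjoint_error_representation {ι : Type*} [Fintype ι] {a b : ℝ} (hab : a ≤ b)
    {e ν r ψ : ℝ → ι → ℝ} {J : ℝ → Matrix ι ι ℝ}
    (he : ∀ t ∈ Ioo a b, HasDerivAt e (J t *ᵥ e t + r t) t)
    (hν : ∀ t ∈ Ioo a b, HasDerivAt ν (-((J t)ᵀ *ᵥ ν t + ψ t)) t)
    (hec : ContinuousOn e (Icc a b)) (hνc : ContinuousOn ν (Icc a b))
    (heψ : IntervalIntegrable (fun t => e t ⬝ᵥ ψ t) volume a b)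
    (hνr : IntervalIntegrable (fun t => ν t ⬝ᵥ r t) volume a b) :
    (∫ t in a..b, e t ⬝ᵥ ψ t) + e b ⬝ᵥ ν b = ν a ⬝ᵥ e a + ∫ t in a..b, ν t ⬝ᵥ r t := by
  have hderiv : ∀ t ∈ Ioo a b,
      HasDerivAt (fun s => ν s ⬝ᵥ e s) (ν t ⬝ᵥ r t - e t ⬝ᵥ ψ t) t := by
    intro t ht
    refine ((hν t ht).dotProduct (he t ht)).congr_deriv ?_
    rw [neg_dotProduct, add_dotProduct, dotProduct_add, dotProduct_comm _ (e t),
      dotProduct_transpose_mulVec, dotProduct_comm (ψ t)]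
    ring
  have hftc := integral_eq_sub_of_hasDerivAt_of_le hab (hνc.dotProduct hec) hderiv (hνr.sub heψ)
  rw [integral_sub hνr heψ, dotProduct_comm (e b)] at *
  linarith

theorem adjoint_ode_error_identity_general {n m : ℕ} (T : ℝ) (hT : 0 < T)
    (f : (Fin n → ℝ) × (Fin m → ℝ) → (Fin n → ℝ))
    (h : (Fin n → ℝ) × (Fin m → ℝ) → (Fin m → ℝ))
    (hf : ContDiff ℝ 1 f) (hh : ContDiff ℝ 1 h)
    (y Y Y' ψy νy : ℝ → Fin n → ℝ) (z Z Z' ψz νz : ℝ → Fin m → ℝ)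
    (ζy : Fin n → ℝ) (ζz : Fin m → ℝ)
    (fby : ℝ → Matrix (Fin n) (Fin n) ℝ) (fbz : ℝ → Matrix (Fin n) (Fin m) ℝ)
    (hby : ℝ → Matrix (Fin m) (Fin n) ℝ) (hbz : ℝ → Matrix (Fin m) (Fin m) ℝ)
    -- the averaged Jacobians satisfy the linearization identities
    (hlinf : ∀ t, fby t *ᵥ (y t - Y t) + fbz t *ᵥ (z t - Z t)
      = f (y t, z t) - f (Y t, Z t))
    (hlinh : ∀ t, hby t *ᵥ (y t - Y t) + hbz t *ᵥ (z t - Z t)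
      = h (y t, z t) - h (Y t, Z t))
    -- the true solution of the index-reduced ODE system
    (hy : ∀ t ∈ Set.Icc (0:ℝ) T, HasDerivAt y (f (y t, z t)) t)
    (hz : ∀ t ∈ Set.Icc (0:ℝ) T, HasDerivAt z (h (y t, z t)) t)
    -- the approximate solution and its derivatives
    (hY : ∀ t ∈ Set.Icc (0:ℝ) T, HasDerivAt Y (Y' t) t)
    (hZ : ∀ t ∈ Set.Icc (0:ℝ) T, HasDerivAt Z (Z' t) t)
    -- the adjoint ODE system
    (hadj1 : ∀ t ∈ Set.Ico (0:ℝ) T,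
      HasDerivAt νy (-((fby t)ᵀ *ᵥ νy t + (hby t)ᵀ *ᵥ νz t + ψy t)) t)
    (hadj2 : ∀ t ∈ Set.Ico (0:ℝ) T,
      HasDerivAt νz (-((fbz t)ᵀ *ᵥ νy t + (hbz t)ᵀ *ᵥ νz t + ψz t)) t)
    -- terminal conditions
    (hνyT : νy T = ζy) (hνzT : νz T = ζz)
    -- sufficient smoothness for the integrals and integration by parts
    (hY'c : Continuous Y')
    (hZ'c : Continuous Z')
    (hψyc : Continuous ψy) (hψzc : Continuous ψz)
    (hνyc : Continuous νy) (hνzc : Continuous νz) :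
    (∫ t in (0:ℝ)..T, (y t - Y t) ⬝ᵥ ψy t)
      + (∫ t in (0:ℝ)..T, (z t - Z t) ⬝ᵥ ψz t)
      + (y T - Y T) ⬝ᵥ ζy + (z T - Z T) ⬝ᵥ ζz
    = νy 0 ⬝ᵥ (y 0 - Y 0) + νz 0 ⬝ᵥ (z 0 - Z 0)
      + (∫ t in (0:ℝ)..T, νy t ⬝ᵥ (f (Y t, Z t) - Y' t))
      + (∫ t in (0:ℝ)..T, νz t ⬝ᵥ (h (Y t, Z t) - Z' t)) := by
  set e : ℝ → Fin n ⊕ Fin m → ℝ := fun t => (y t - Y t) ⊕ᵥ (z t - Z t)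
  set ν : ℝ → Fin n ⊕ Fin m → ℝ := fun t => νy t ⊕ᵥ νz t
  set J : ℝ → Matrix (Fin n ⊕ Fin m) (Fin n ⊕ Fin m) ℝ :=
    fun t => fromBlocks (fby t) (fbz t) (hby t) (hbz t)
  set r : ℝ → Fin n ⊕ Fin m → ℝ := fun t => (f (Y t, Z t) - Y' t) ⊕ᵥ (h (Y t, Z t) - Z' t)
  have he : ∀ t ∈ Icc 0 T, HasDerivAt e (J t *ᵥ e t + r t) t := by
    intro t ht
    refine (((hy t ht).sub (hY t ht)).sumElim ((hz t ht).sub (hZ t ht))).congr_deriv ?_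
    rw [fromBlocks_mulVec_sumElim, ← Sum.elim_add_add, hlinf, hlinh, sub_add_sub_cancel,
      sub_add_sub_cancel]
  have hν : ∀ t ∈ Ioo 0 T, HasDerivAt ν (-((J t)ᵀ *ᵥ ν t + (ψy t ⊕ᵥ ψz t))) t := by
    intro t ht
    refine ((hadj1 t (Ioo_subset_Ico_self ht)).sumElim
      (hadj2 t (Ioo_subset_Ico_self ht))).congr_deriv ?_
    simp only [J, ν, fromBlocks_transpose, fromBlocks_mulVec_sumElim, Sum.elim_add_add,
      Sum.elim_neg_neg]
  have hYZ : ContinuousOn (fun t => (Y t, Z t)) (Icc 0 T) :=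
    (HasDerivAt.continuousOn hY).prodMk (HasDerivAt.continuousOn hZ)
  have integrable {k : ℕ} {u v : ℝ → Fin k → ℝ} (hu : ContinuousOn u (Icc 0 T))
      (hv : ContinuousOn v (Icc 0 T)) : IntervalIntegrable (fun t => u t ⬝ᵥ v t) volume 0 T :=
    (hu.dotProduct hv).intervalIntegrable_of_Icc hT.le
  have iy : IntervalIntegrable (fun t => (y t - Y t) ⬝ᵥ ψy t) volume 0 T :=
    integrable (HasDerivAt.continuousOn fun t ht => (hy t ht).sub (hY t ht)) hψyc.continuousOn
  have iz : IntervalIntegrable (fun t => (z t - Z t) ⬝ᵥ ψz t) volume 0 T :=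
    integrable (HasDerivAt.continuousOn fun t ht => (hz t ht).sub (hZ t ht)) hψzc.continuousOn
  have jy : IntervalIntegrable (fun t => νy t ⬝ᵥ (f (Y t, Z t) - Y' t)) volume 0 T :=
    integrable hνyc.continuousOn ((hf.continuous.comp_continuousOn hYZ).sub hY'c.continuousOn)
  have jz : IntervalIntegrable (fun t => νz t ⬝ᵥ (h (Y t, Z t) - Z' t)) volume 0 T :=
    integrable hνzc.continuousOn ((hh.continuous.comp_continuousOn hYZ).sub hZ'c.continuousOn)
  have hνc : Continuous ν := continuous_pi fun
    | .inl i => (continuous_apply i).comp hνyc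
    | .inr j => (continuous_apply j).comp hνzc
  have key := adjoint_error_representation hT.le (fun t ht => he t (Ioo_subset_Icc_self ht)) hν
    (HasDerivAt.continuousOn he) hνc.continuousOn (by simpa only [e, sumElim_dotProduct_sumElim] using iy.add iz)
    (by simpa only [ν, r, sumElim_dotProduct_sumElim] using jy.add jz)
  simp only [e, ν, r, sumElim_dotProduct_sumElim] at key
  rw [integral_add iy iz, integral_add jy jz, hνyT, hνzT] at key
  linarith

/-- Error identity for the index-reduced ODE system via the adjoint ODE. -/
theorem adjoint_ode_error_identity {n m : ℕ} (T : ℝ) (hT : 0 < T)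
    (f : (Fin n → ℝ) × (Fin m → ℝ) → (Fin n → ℝ))
    (h : (Fin n → ℝ) × (Fin m → ℝ) → (Fin m → ℝ))
    (hf : ContDiff ℝ 1 f) (hh : ContDiff ℝ 1 h)
    (y Y Y' ψy νy : ℝ → Fin n → ℝ) (z Z Z' ψz νz : ℝ → Fin m → ℝ)
    (ζy : Fin n → ℝ) (ζz : Fin m → ℝ)
    (fby : ℝ → Matrix (Fin n) (Fin n) ℝ) (fbz : ℝ → Matrix (Fin n) (Fin m) ℝ)
    (hby : ℝ → Matrix (Fin m) (Fin n) ℝ) (hbz : ℝ → Matrix (Fin m) (Fin m) ℝ)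
    -- the averaged Jacobians satisfy the linearization identities
    (hlinf : ∀ t, fby t *ᵥ (y t - Y t) + fbz t *ᵥ (z t - Z t)
      = f (y t, z t) - f (Y t, Z t))
    (hlinh : ∀ t, hby t *ᵥ (y t - Y t) + hbz t *ᵥ (z t - Z t)
      = h (y t, z t) - h (Y t, Z t))
    -- the true solution of the index-reduced ODE system
    (hy : ∀ t ∈ Set.Icc (0:ℝ) T, HasDerivAt y (f (y t, z t)) t)
    (hz : ∀ t ∈ Set.Icc (0:ℝ) T, HasDerivAt z (h (y t, z t)) t)
    -- the approximate solution and its derivatives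
    (hY : ∀ t ∈ Set.Icc (0:ℝ) T, HasDerivAt Y (Y' t) t)
    (hZ : ∀ t ∈ Set.Icc (0:ℝ) T, HasDerivAt Z (Z' t) t)
    -- the adjoint ODE system
    (hadj1 : ∀ t ∈ Set.Ico (0:ℝ) T,
      HasDerivAt νy (-((fby t)ᵀ *ᵥ νy t + (hby t)ᵀ *ᵥ νz t + ψy t)) t)
    (hadj2 : ∀ t ∈ Set.Ico (0:ℝ) T,
      HasDerivAt νz (-((fbz t)ᵀ *ᵥ νy t + (hbz t)ᵀ *ᵥ νz t + ψz t)) t)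
    -- terminal conditions
    (hνyT : νy T = ζy) (hνzT : νz T = ζz)
    -- sufficient smoothness for the integrals and integration by parts
    (hyc : Continuous y) (hYc : Continuous Y) (hY'c : Continuous Y')
    (hzc : Continuous z) (hZc : Continuous Z) (hZ'c : Continuous Z')
    (hψyc : Continuous ψy) (hψzc : Continuous ψz)
    (hνyc : Continuous νy) (hνzc : Continuous νz) :
    (∫ t in (0:ℝ)..T, (y t - Y t) ⬝ᵥ ψy t)
      + (∫ t in (0:ℝ)..T, (z t - Z t) ⬝ᵥ ψz t)
      + (y T - Y T) ⬝ᵥ ζy + (z T - Z T) ⬝ᵥ ζz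
    = νy 0 ⬝ᵥ (y 0 - Y 0) + νz 0 ⬝ᵥ (z 0 - Z 0)
      + (∫ t in (0:ℝ)..T, νy t ⬝ᵥ (f (Y t, Z t) - Y' t))
      + (∫ t in (0:ℝ)..T, νz t ⬝ᵥ (h (Y t, Z t) - Z' t)) :=
  adjoint_ode_error_identity_general T hT f h hf hh y Y Y' ψy νy z Z Z' ψz νz ζy ζz fby fbz hby hbz
    hlinf hlinh hy hz hY hZ hadj1 hadj2 hνyT hνzT hY'c hZ'c hψyc hψzc hνyc hνzc
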